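/- A 2×2 integer matrix A is a non-trivial strongly clean element of M₂(ℤ) if and only if A is similar over ℤ to one of the four matrices diag(1,0), diag(-1,0), diag(1,2), diag(-1,2). -/

import Mathlib

/-- An element of a ring is strongly clean if it is the sum of an idempotent and a unit
that commute with each other. -/
def IsStronglyClean {S : Type*} [Ring S] (a : S) : Prop :=
  ∃ e u : S, IsIdempotentElem e ∧ IsUnit u ∧ a = e + u ∧ e * u = u * e

/-- `A` and `B` are similar `2×2` matrices. -/
def SimilarMat {R : Type*} [Ring R] (A B : Matrix (Fin 2) (Fin 2) R) : Prop :=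
  ∃ P : (Matrix (Fin 2) (Fin 2) R)ˣ, A = P.val * B * (P⁻¹).val

/-!
If `A = e + u` is non-trivial strongly clean, the idempotent `e` is neither `0` nor `1`. Over `ℤ`
such an `e` has determinant `0`, so it is a rank-one product `x yᵀ`, and idempotency forces
`y ⬝ x = 1`; the unimodular basis `x, (-y₁, y₀)` then conjugates `e` to `diag(1, 0)`. The same
conjugation turns `u` into a unit commuting with `diag(1, 0)`, that is `diag(±1, ±1)`, so `A` is
similar to `diag(1 ± 1, ±1)`. Conversely `diag(σ, τ) = diag(0, 1) + diag(σ, τ - 1)`, and being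
non-trivial strongly clean is invariant under conjugation.
-/

open Matrix

section Ring

variable {R : Type*} [Ring R]

theorem IsStronglyClean.map {S F : Type*} [Ring S] [FunLike F R S] [RingHomClass F R S] {a : R}
    (h : IsStronglyClean a) (f : F) : IsStronglyClean (f a) := by
  obtain ⟨e, u, he, hu, rfl, hcomm⟩ := h
  exact ⟨f e, f u, he.map f, hu.map f, map_add f e u, by rw [← map_mul, hcomm, map_mul]⟩

theorem IsUnit.isStronglyClean {a : R} (h : IsUnit a) : IsStronglyClean a :=
  ⟨0, a, .zero, h, (zero_add a).symm, by simp⟩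

theorem isStronglyClean_of_isUnit_sub_one {a : R} (h : IsUnit (a - 1)) : IsStronglyClean a :=
  ⟨1, a - 1, .one, h, by abel, by simp⟩

theorem isStronglyClean_pi {ι : Type*} {S : ι → Type*} [∀ i, Ring (S i)] {a : ∀ i, S i}
    (h : ∀ i, IsStronglyClean (a i)) : IsStronglyClean a := by
  choose e u he hu ha hcomm using h
  exact ⟨e, u, funext he, Pi.isUnit_iff.mpr hu, funext ha, funext hcomm⟩

def IsNontrivialStronglyClean (a : R) : Prop :=
  IsStronglyClean a ∧ ¬IsUnit a ∧ ¬IsUnit (1 - a)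

theorem IsNontrivialStronglyClean.map {S : Type*} [Ring S] {a : R}
    (h : IsNontrivialStronglyClean a) (f : R ≃+* S) : IsNontrivialStronglyClean (f a) := by
  obtain ⟨hsc, ha, ha'⟩ := h
  refine ⟨hsc.map f, by rwa [isUnit_map_iff], ?_⟩
  rwa [← map_one f, ← map_sub, isUnit_map_iff]

theorem IsNontrivialStronglyClean.exists_decomposition {a : R} (h : IsNontrivialStronglyClean a) :
    ∃ e u : R, IsIdempotentElem e ∧ e ≠ 0 ∧ e ≠ 1 ∧ IsUnit u ∧ a = e + u ∧ Commute e u := by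
  obtain ⟨⟨e, u, he, hu, rfl, hcomm⟩, ha, ha'⟩ := h
  refine ⟨e, u, he, ?_, ?_, hu, rfl, hcomm⟩
  · rintro rfl
    exact ha (by rwa [zero_add])
  · rintro rfl
    exact ha' (by simpa using hu.neg)

theorem SimilarMat.trans {A B C : Matrix (Fin 2) (Fin 2) R} (hAB : SimilarMat A B)
    (hBC : SimilarMat B C) : SimilarMat A C := by
  obtain ⟨P, rfl⟩ := hAB
  obtain ⟨Q, rfl⟩ := hBC
  exact ⟨P * Q, by simp [mul_assoc]⟩

theorem SimilarMat.isNontrivialStronglyClean {A B : Matrix (Fin 2) (Fin 2) R}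
    (hAB : SimilarMat A B) (hB : IsNontrivialStronglyClean B) : IsNontrivialStronglyClean A := by
  obtain ⟨P, rfl⟩ := hAB
  simpa [ConjAct.units_smul_def] using
    hB.map (MulSemiringAction.toRingEquiv _ _ (ConjAct.toConjAct P))

theorem eq_diagonal_of_commute_diagonal_one_zero {V : Matrix (Fin 2) (Fin 2) R}
    (h : Commute (diagonal ![1, 0]) V) : V = diagonal ![V 0 0, V 1 1] := by
  have h01 : V 0 1 = 0 := by simpa [mul_apply] using congrFun (congrFun h.eq 0) 1
  have h10 : V 1 0 = 0 := by simpa [mul_apply] using (congrFun (congrFun h.eq 1) 0).symm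
  conv_lhs => rw [V.eta_fin_two]
  rw [diagonal_vec2, h01, h10]

end Ring

section CommRing

variable {R : Type*} [CommRing R]

theorem isNontrivialStronglyClean_diagonal {n : Type*} [Fintype n] [DecidableEq n] {d : n → R}
    (h : ∀ i, IsStronglyClean (d i)) (i j : n) (hi : ¬IsUnit (d i)) (hj : ¬IsUnit (1 - d j)) :
    IsNontrivialStronglyClean (diagonal d) := by
  refine ⟨(isStronglyClean_pi h).map (diagonalRingHom n R), ?_, ?_⟩
  · rw [isUnit_diagonal, Pi.isUnit_iff]
    exact fun h ↦ hi (h i)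
  · rw [← diagonal_one, diagonal_sub, isUnit_diagonal, Pi.isUnit_iff]
    exact fun h ↦ hj (h j)

theorem IsIdempotentElem.det_eq_zero [IsDomain R] {n : Type*} [Fintype n] [DecidableEq n]
    {E : Matrix n n R} (he : IsIdempotentElem E) (h1 : E ≠ 1) : E.det = 0 := by
  have hdet : E.det * (E.det - 1) = 0 := by
    rw [mul_sub_one, ← det_mul, he.eq, sub_self]
  refine (mul_eq_zero.mp hdet).resolve_right fun h ↦ h1 ?_
  rw [sub_eq_zero] at h
  exact (IsIdempotentElem.iff_eq_one_of_isUnit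
    ((isUnit_iff_isUnit_det E).mpr (h ▸ isUnit_one))).mp he

theorem similarMat_of_mul_eq_mul {A B P : Matrix (Fin 2) (Fin 2) R} (hP : IsUnit P.det)
    (h : A * P = P * B) : SimilarMat A B := by
  obtain ⟨U, rfl⟩ := (isUnit_iff_isUnit_det P).mpr hP
  exact ⟨U, by rw [← h, Units.mul_inv_cancel_right]⟩

theorem similarMat_diagonal_swap (a d : R) : SimilarMat (diagonal ![a, d]) (diagonal ![d, a]) :=
  similarMat_of_mul_eq_mul (P := !![0, 1; 1, 0]) (by simp [det_fin_two_of])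
    (by simp [diagonal_vec2])

theorem similarMat_vecMulVec_of_dotProduct_eq_one {x y : Fin 2 → R} (h : y ⬝ᵥ x = 1) :
    SimilarMat (vecMulVec x y) (diagonal ![1, 0]) := by
  rw [dotProduct, Fin.sum_univ_two] at h
  refine similarMat_of_mul_eq_mul (P := !![x 0, -y 1; x 1, y 0]) ?_ ?_
  · rw [det_fin_two_of]
    convert isUnit_one using 1
    linear_combination h
  · ext i j
    fin_cases i <;> fin_cases j <;> simp [mul_apply, vecMulVec_apply] <;> grind

end CommRing

theorem Matrix.exists_eq_vecMulVec_of_det_eq_zero {E : Matrix (Fin 2) (Fin 2) ℤ} (h : E.det = 0) :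
    ∃ x y : Fin 2 → ℤ, E = vecMulVec x y := by
  rw [det_fin_two] at h
  rw [E.eta_fin_two]
  set a := E 0 0; set b := E 0 1; set c := E 1 0; set d := E 1 1
  by_cases hac : a = 0 ∧ c = 0
  · obtain ⟨ha, hc⟩ := hac
    refine ⟨![b, d], ![0, 1], ?_⟩
    ext i j; fin_cases i <;> fin_cases j <;> simp [vecMulVec_apply, ha, hc]
  -- with `g = gcd a c = a u + c v`, the first column is `g • x` for a vector `x` with
  -- `x ⬝ᵥ (u, v) = 1`, and `(u, v) ⬝ᵥ (b, d)` is then the factor of the second column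
  set g : ℤ := (Int.gcd a c : ℤ)
  obtain ⟨a', ha'⟩ : g ∣ a := Int.gcd_dvd_left a c
  obtain ⟨c', hc'⟩ : g ∣ c := Int.gcd_dvd_right a c
  have hg : g ≠ 0 := by simpa [g, Int.gcd_eq_zero_iff] using hac
  have hbezout : a' * Int.gcdA a c + c' * Int.gcdB a c = 1 := by
    apply mul_left_cancel₀ hg
    linear_combination (Int.gcd_eq_gcd_ab a c).symm - Int.gcdA a c * ha' - Int.gcdB a c * hc'
  have hcross : a' * d = c' * b := by
    apply mul_left_cancel₀ hg
    linear_combination h - d * ha' + b * hc'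
  refine ⟨![a', c'], ![g, Int.gcdA a c * b + Int.gcdB a c * d], ?_⟩
  ext i j; fin_cases i <;> fin_cases j <;> simp [vecMulVec_apply] <;> grind

theorem IsIdempotentElem.similarMat_diagonal_one_zero {E : Matrix (Fin 2) (Fin 2) ℤ}
    (he : IsIdempotentElem E) (h0 : E ≠ 0) (h1 : E ≠ 1) : SimilarMat E (diagonal ![1, 0]) := by
  obtain ⟨x, y, rfl⟩ := exists_eq_vecMulVec_of_det_eq_zero (he.det_eq_zero h1)
  refine similarMat_vecMulVec_of_dotProduct_eq_one (sub_eq_zero.mp ?_)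
  have : (y ⬝ᵥ x - 1) • vecMulVec x y = 0 := by
    rw [sub_smul, one_smul, ← vecMulVec_smul, ← vecMulVec_mul_vecMulVec, he.eq, sub_self]
  exact (smul_eq_zero.mp this).resolve_right h0

theorem IsNontrivialStronglyClean.exists_similarMat_diagonal {A : Matrix (Fin 2) (Fin 2) ℤ}
    (h : IsNontrivialStronglyClean A) :
    ∃ p s : ℤ, IsUnit p ∧ IsUnit s ∧ SimilarMat A (diagonal ![s, 1 + p]) := by
  obtain ⟨e, u, he, he0, he1, hu, rfl, hcomm⟩ := h.exists_decomposition
  obtain ⟨P, hP⟩ := he.similarMat_diagonal_one_zero he0 he1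
  set c := MulSemiringAction.toRingEquiv _ (Matrix (Fin 2) (Fin 2) ℤ) (ConjAct.toConjAct P⁻¹)
  have hc : ∀ X, c X = P⁻¹.val * X * P.val := fun X ↦ by simp [c, ConjAct.units_smul_def]
  have hce : c e = diagonal ![1, 0] := by simp [hc, hP, mul_assoc]
  set V := c u
  have hV : V = diagonal ![V 0 0, V 1 1] :=
    eq_diagonal_of_commute_diagonal_one_zero (hce ▸ hcomm.map c)
  have hVunit : IsUnit (V 0 0) ∧ IsUnit (V 1 1) := by
    have : IsUnit V := hu.map c
    rwa [hV, isUnit_diagonal, Pi.isUnit_iff, Fin.forall_fin_two] at this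
  have hcA : c (e + u) = diagonal ![1 + V 0 0, V 1 1] := by
    rw [map_add, hce]
    change _ + V = _
    rw [hV, diagonal_add]
    congr 1
    ext i
    fin_cases i <;> simp
  refine ⟨V 0 0, V 1 1, hVunit.1, hVunit.2, SimilarMat.trans ⟨P, ?_⟩ (similarMat_diagonal_swap _ _)⟩
  rw [← hcA, hc]
  simp [mul_assoc]

theorem isNontrivialStronglyClean_diagonal_int {σ τ : ℤ} (hσ : σ = 1 ∨ σ = -1)
    (hτ : τ = 0 ∨ τ = 2) : IsNontrivialStronglyClean (diagonal ![σ, τ]) := by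
  have hσ' : IsUnit σ ∧ ¬IsUnit (1 - σ) := by
    rcases hσ with rfl | rfl <;> norm_num [Int.isUnit_iff]
  have hτ' : IsUnit (τ - 1) ∧ ¬IsUnit τ := by
    rcases hτ with rfl | rfl <;> norm_num [Int.isUnit_iff]
  refine isNontrivialStronglyClean_diagonal (fun i ↦ ?_) 1 0 hτ'.2 hσ'.2
  fin_cases i
  exacts [hσ'.1.isStronglyClean, isStronglyClean_of_isUnit_sub_one hτ'.1]

theorem nontrivial_stronglyClean_int_matrix_iff (A : Matrix (Fin 2) (Fin 2) ℤ) :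
    (IsStronglyClean A ∧ ¬ IsUnit A ∧ ¬ IsUnit (1 - A)) ↔
      (SimilarMat A !![(1 : ℤ), 0; 0, 0] ∨ SimilarMat A !![(-1 : ℤ), 0; 0, 0] ∨
       SimilarMat A !![(1 : ℤ), 0; 0, 2] ∨ SimilarMat A !![(-1 : ℤ), 0; 0, 2]) := by
  simp only [← diagonal_vec2]
  constructor
  · intro h
    obtain ⟨p, s, hp, hs, hA⟩ := IsNontrivialStronglyClean.exists_similarMat_diagonal h
    rcases Int.isUnit_iff.mp hp with rfl | rfl <;> rcases Int.isUnit_iff.mp hs with rfl | rfl <;>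
      norm_num at hA <;> simp [hA]
  · rintro (h | h | h | h) <;>
      exact h.isNontrivialStronglyClean
        (isNontrivialStronglyClean_diagonal_int (by norm_num) (by norm_num))
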